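/- Let d : X → ℝ be continuously differentiable and 1-strongly convex with respect to a norm ‖·‖, and let V(x,y) = d(y) − d(x) − ⟨∇d(x), y − x⟩ be the Bregman divergence. Let Q ⊆ X be closed convex, y ∈ Q, p ∈ X*, h > 0, and z = argmin_{u ∈ Q} { ⟨h·p, u⟩ + V(y, u) }. Then for every x ∈ Q: h⟨p, y − x⟩ ≤ (h²/2)‖p‖_*² + V(y, x) − V(z, x). -/

import Mathlib

/-!
The first-order optimality condition for `z` gives
`h⟨p, z - x⟩ ≤ ⟨∇d(z) - ∇d(y), x - z⟩ = V(y, x) - V(z, x) - V(y, z)` (three-point identity).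
Strong convexity gives `V(y, z) ≥ ‖y - z‖² / 2`, and Young's inequality bounds
`h⟨p, y - z⟩ ≤ h²‖p‖²/2 + ‖y - z‖²/2`; adding the two estimates proves the claim.
-/

open Set

section Bregman

variable {E : Type*} [NormedAddCommGroup E] [NormedSpace ℝ E]

/-- The paper's `V(x, y)`, with `d' x` standing for `∇d(x)`. -/
noncomputable def bregmanDiv (d : E → ℝ) (d' : E → E →L[ℝ] ℝ) (x y : E) : ℝ :=
  d y - d x - d' x (y - x)

theorem bregmanDiv_sub_bregmanDiv_sub_bregmanDiv (d : E → ℝ) (d' : E → E →L[ℝ] ℝ)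
    (x y z : E) :
    bregmanDiv d d' y x - bregmanDiv d d' z x - bregmanDiv d d' y z = (d' z - d' y) (x - z) := by
  simp only [bregmanDiv, sub_apply, map_sub]
  ring

variable {d : E → ℝ} {d' : E → E →L[ℝ] ℝ}

theorem mul_norm_sq_le_apply_add_smul (hstrong : ∀ x y : E, ‖x - y‖ ^ 2 ≤ (d' x - d' y) (x - y))
    (a c : E) {t : ℝ} (ht : 0 < t) :
    t * ‖c‖ ^ 2 ≤ (d' (a + t • c) - d' a) c := by
  have h := hstrong (a + t • c) a
  rw [add_sub_cancel_left, map_smul, smul_eq_mul, norm_smul, Real.norm_of_nonneg ht.le,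
    mul_pow, sq t, mul_assoc] at h
  exact le_of_mul_le_mul_left h ht

theorem norm_sub_sq_div_two_le_bregmanDiv (hd : ∀ x, HasFDerivAt d (d' x) x)
    (hstrong : ∀ x y : E, ‖x - y‖ ^ 2 ≤ (d' x - d' y) (x - y)) (a b : E) :
    ‖b - a‖ ^ 2 / 2 ≤ bregmanDiv d d' a b := by
  set c := b - a
  -- `φ' ≥ 0` on `t ≥ 0` by strong monotonicity, and `φ 1 - φ 0 = V(a, b) - ‖c‖² / 2`.
  set φ : ℝ → ℝ := fun t => d (a + t • c) - t * d' a c - t ^ 2 / 2 * ‖c‖ ^ 2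
  have hφ' : ∀ t, HasDerivAt φ (d' (a + t • c) c - d' a c - t * ‖c‖ ^ 2) t := by
    intro t
    have hline : HasDerivAt (fun t : ℝ => a + t • c) c t := by
      simpa using ((hasDerivAt_id t).smul_const c).const_add a
    have hsq : HasDerivAt (fun t : ℝ => t ^ 2 / 2 * ‖c‖ ^ 2) (t * ‖c‖ ^ 2) t := by
      simpa using ((hasDerivAt_pow 2 t).div_const 2).mul_const (‖c‖ ^ 2)
    exact (((hd _).comp_hasDerivAt t hline).sub
      (by simpa using (hasDerivAt_id t).mul_const (d' a c))).sub hsq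
  have hmono : MonotoneOn φ (Ici 0) := by
    refine monotoneOn_of_hasDerivWithinAt_nonneg (convex_Ici 0)
      (fun t _ => (hφ' t).continuousAt.continuousWithinAt)
      (fun t _ => (hφ' t).hasDerivWithinAt) fun t ht => ?_
    rw [interior_Ici] at ht
    have := mul_norm_sq_le_apply_add_smul hstrong a c ht
    rw [sub_apply] at this
    linarith
  have h01 := hmono self_mem_Ici (mem_Ici.2 zero_le_one) zero_le_one
  simp only [φ, zero_smul, add_zero, one_smul, zero_mul, sub_zero, c, add_sub_cancel] at h01
  simp only [bregmanDiv]
  linarith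

end Bregman

theorem IsMinOn.hasFDerivAt_apply_sub_nonneg {E : Type*} [NormedAddCommGroup E]
    [NormedSpace ℝ E] {f : E → ℝ} {f' : E →L[ℝ] ℝ} {s : Set E} {a x : E}
    (hmin : IsMinOn f s a) (hs : Convex ℝ s) (ha : a ∈ s) (hx : x ∈ s)
    (hf : HasFDerivAt f f' a) : 0 ≤ f' (x - a) :=
  hmin.localize.hasFDerivWithinAt_nonneg hf.hasFDerivWithinAt
    (sub_mem_posTangentConeAt_of_segment_subset (hs.segment_subset ha hx))

theorem ContinuousLinearMap.mul_apply_le_sq_norm_add_sq_norm {E : Type*} [NormedAddCommGroup E] [NormedSpace ℝ E]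
    (p : E →L[ℝ] ℝ) (h : ℝ) (v : E) :
    h * p v ≤ h ^ 2 / 2 * ‖p‖ ^ 2 + ‖v‖ ^ 2 / 2 := by
  have hpv : |p v| ≤ ‖p‖ * ‖v‖ := p.le_opNorm v
  calc h * p v ≤ |h| * |p v| := (le_abs_self _).trans (abs_mul h (p v)).le
    _ ≤ |h| * (‖p‖ * ‖v‖) := by gcongr
    _ ≤ h ^ 2 / 2 * ‖p‖ ^ 2 + ‖v‖ ^ 2 / 2 := by
        nlinarith [sq_nonneg (|h| * ‖p‖ - ‖v‖), sq_abs h]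

theorem stmt7_general (X : Type*) [NormedAddCommGroup X] [NormedSpace ℝ X]
    (d : X → ℝ) (d' : X → X →L[ℝ] ℝ)
    (hd : ∀ x, HasFDerivAt d (d' x) x)
    (hstrong : ∀ x y : X, ‖x - y‖ ^ 2 ≤ (d' x - d' y) (x - y))
    (Q : Set X) (hQ : Convex ℝ Q)
    (y : X) (p : X →L[ℝ] ℝ) (h : ℝ)
    (z : X) (hz : z ∈ Q)
    (hmin : ∀ u ∈ Q, h * p z + (d z - d y - d' y (z - y))
      ≤ h * p u + (d u - d y - d' y (u - y))) :
    ∀ x ∈ Q, h * p (y - x) ≤ h ^ 2 / 2 * ‖p‖ ^ 2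
      + (d x - d y - d' y (x - y)) - (d x - d z - d' z (x - z)) := by
  intro x hx
  have hderiv :
      HasFDerivAt (fun u => h * p u + bregmanDiv d d' y u) (h • p + (d' z - d' y)) z := by
    have hlin : HasFDerivAt (fun u => d' y (u - y)) (d' y) z := by
      simpa only [map_sub] using (d' y).hasFDerivAt.sub_const (d' y y)
    exact (p.hasFDerivAt.const_mul h).add (((hd z).sub_const (d y)).sub hlin)
  have hopt := IsMinOn.hasFDerivAt_apply_sub_nonneg (isMinOn_iff.2 hmin) hQ hz hx hderiv
  have hsplit : p (y - x) = p (y - z) - p (x - z) := by simp only [map_sub]; ring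
  have hyoung := p.mul_apply_le_sq_norm_add_sq_norm h (y - z)
  have hlower := norm_sub_sq_div_two_le_bregmanDiv hd hstrong y z
  have hthree := bregmanDiv_sub_bregmanDiv_sub_bregmanDiv d d' x y z
  rw [norm_sub_rev] at hlower
  simp only [add_apply, smul_apply, smul_eq_mul] at hopt
  change h * p (y - x) ≤ h ^ 2 / 2 * ‖p‖ ^ 2 + bregmanDiv d d' y x - bregmanDiv d d' z x
  rw [hsplit]
  linarith

theorem stmt7 (X : Type*) [NormedAddCommGroup X] [NormedSpace ℝ X]
    [FiniteDimensional ℝ X]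
    (d : X → ℝ) (d' : X → X →L[ℝ] ℝ)
    (hd : ∀ x, HasFDerivAt d (d' x) x) (hd' : Continuous d')
    (hstrong : ∀ x y : X, ‖x - y‖ ^ 2 ≤ (d' x - d' y) (x - y))
    (Q : Set X) (hQc : IsClosed Q) (hQ : Convex ℝ Q)
    (y : X) (hy : y ∈ Q) (p : X →L[ℝ] ℝ) (h : ℝ) (hh : 0 < h)
    (z : X) (hz : z ∈ Q)
    (hmin : ∀ u ∈ Q, h * p z + (d z - d y - d' y (z - y))
      ≤ h * p u + (d u - d y - d' y (u - y))) :
    ∀ x ∈ Q, h * p (y - x) ≤ h ^ 2 / 2 * ‖p‖ ^ 2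
      + (d x - d y - d' y (x - y)) - (d x - d z - d' z (x - z)) :=
  stmt7_general X d d' hd hstrong Q hQ y p h z hz hmin
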